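/- In the sequential lambda-calculus modulo the equational theory, currying M* := <x⃗>.[[x⃗].M] of a term M : ?s?r > !t satisfies the exponential laws: (id × M*) ; ε = M and ((id × N) ; ε)* = N, where ε = <z>.z is evaluation; hence exponents exist and are unique. -/

import Mathlib

/- ===== Terms (sequential λ-calculus uses only the main location `0`) ===== -/
inductive Tm : Type
  | nil : Tm
  | var : ℕ → Tm → Tm
  | app : Tm → ℕ → Tm → Tm
  | abs : ℕ → ℕ → Tm → Tm
  deriving DecidableEq

namespace Tm
def comp : Tm → Tm → Tm
  | nil, M => M
  | var x N, M => var x (comp N M)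
  | app P a N, M => app P a (comp N M)
  | abs a x N, M => abs a x (comp N M)
def fv : Tm → Finset ℕ
  | nil => ∅
  | var x N => insert x (fv N)
  | app P _ N => fv P ∪ fv N
  | abs _ x N => (fv N).erase x
def subst (P : Tm) (x : ℕ) : Tm → Tm
  | nil => nil
  | var y M => if y = x then comp P (subst P x M) else var y (subst P x M)
  | app N a M => app (subst P x N) a (subst P x M)
  | abs a y M => if y = x then abs a y M else abs a y (subst P x M)
end Tm

/-- `<?x>.M`: the sequence of pops `<x_n>…<x_1>.M` (main location). -/
def pops (xs : List ℕ) (M : Tm) : Tm := xs.foldl (fun acc x => Tm.abs 0 x acc) M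

/-- `[!x].M`: the sequence of pushes `[x_1]…[x_n].M` (main location). -/
def pushes (xs : List ℕ) (M : Tm) : Tm :=
  xs.foldr (fun x acc => Tm.app (Tm.var x Tm.nil) 0 acc) M

/-- `xs` is fresh for `M`: no variable of `xs` occurs free in `M`. -/
def FreshL (xs : List ℕ) (M : Tm) : Prop := ∀ x ∈ xs, x ∉ M.fv

/- ===== Simple types of the sequential λ-calculus ===== -/
/-- Sequential simple types: base types and stack-transformer types `?s > !t`,
with stack types as lists of types (head = top of stack). -/
inductive STy : Type
  | base : ℕ → STy
  | arr : List STy → List STy → STy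

/-- Typing of the sequential λ-calculus (all actions at the main location `0`). -/
inductive SDeriv : List (ℕ × STy) → Tm → STy → Prop
  | nil {Γ : List (ℕ × STy)} (t : List STy) : SDeriv Γ .nil (.arr t t)
  | bvar {Γ : List (ℕ × STy)} {x α} : (x, STy.base α) ∈ Γ →
      SDeriv Γ (.var x .nil) (.base α)
  | seqvar {Γ : List (ℕ × STy)} {x : ℕ} {r s t u : List STy} {M : Tm} :
      (x, STy.arr r s) ∈ Γ → SDeriv Γ M (.arr (s ++ t) u) →
      SDeriv Γ (.var x M) (.arr (r ++ t) u)
  | abs {Γ : List (ℕ × STy)} {x : ℕ} {r : STy} {s t : List STy} {M : Tm} :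
      SDeriv ((x, r) :: Γ) M (.arr s t) →
      SDeriv Γ (.abs 0 x M) (.arr (r :: s) t)
  | app {Γ : List (ℕ × STy)} {r : STy} {s t : List STy} {N M : Tm} :
      SDeriv Γ N r → SDeriv Γ M (.arr (r :: s) t) →
      SDeriv Γ (.app N 0 M) (.arr s t)

/- ===== Beta-eta equivalence ===== -/
/-- Beta-eta equivalence of the sequential λ-calculus: generated by
`[N].<x>.M = {N/x}M` and `M = <x>.[x].M` (`x ∉ fv M`), closed under all
contexts; an equivalence relation. -/
inductive BetaEta : Tm → Tm → Prop
  | beta {N x M} : BetaEta (.app N 0 (.abs 0 x M)) (Tm.subst N x M)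
  | eta {M x} : x ∉ Tm.fv M → BetaEta M (.abs 0 x (.app (.var x .nil) 0 M))
  | refl (M) : BetaEta M M
  | symm {M N} : BetaEta M N → BetaEta N M
  | trans {M N P} : BetaEta M N → BetaEta N P → BetaEta M P
  | var_congr {x M M'} : BetaEta M M' → BetaEta (.var x M) (.var x M')
  | app_left {N N' a M} : BetaEta N N' → BetaEta (.app N a M) (.app N' a M)
  | app_right {N a M M'} : BetaEta M M' → BetaEta (.app N a M) (.app N a M')
  | abs_congr {a x M M'} : BetaEta M M' → BetaEta (.abs a x M) (.abs a x M')

/- ===== The equational theory ===== -/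
/-- The equational theory `=eqn` of the sequential λ-calculus: beta,
interchange, diagonal, terminal, first-order eta and higher-order eta,
closed under all contexts (freshness side conditions as in the paper). -/
inductive EqTh : Tm → Tm → Prop
  | beta {N x M} : EqTh (.app N 0 (.abs 0 x M)) (Tm.subst N x M)
  | interchange {xs ys : List ℕ} {N M : Tm} :
      xs.Nodup → ys.Nodup → FreshL xs N → FreshL xs M → FreshL ys N → FreshL ys M →
      EqTh (pops xs (Tm.comp N (pushes xs M)))
           (Tm.comp M (pops ys (Tm.comp N (pushes ys .nil))))
  | diagonal {xs ys : List ℕ} {M : Tm} :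
      xs.Nodup → ys.Nodup → FreshL xs M → FreshL ys M →
      EqTh (Tm.comp M (pops ys (pushes ys (pushes ys .nil))))
           (pops xs (pushes xs (Tm.comp M (pushes xs M))))
  | terminal {xs ys : List ℕ} {M : Tm} :
      EqTh (Tm.comp M (pops ys .nil)) (pops xs .nil)
  | eta1 {a : ℕ} : EqTh .nil (.abs 0 a (.app (.var a .nil) 0 .nil))
  | etaho {xs : List ℕ} {z : ℕ} {P : Tm} :
      xs.Nodup → FreshL xs P → z ∉ Tm.fv P →
      EqTh P (pops xs (.app (pushes xs (Tm.comp P (.abs 0 z (.var z .nil)))) 0 .nil))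
  | refl (M) : EqTh M M
  | symm {M N} : EqTh M N → EqTh N M
  | trans {M N P} : EqTh M N → EqTh N P → EqTh M P
  | var_congr {x M M'} : EqTh M M' → EqTh (.var x M) (.var x M')
  | app_left {N N' a M} : EqTh N N' → EqTh (.app N a M) (.app N' a M)
  | app_right {N a M M'} : EqTh M M' → EqTh (.app N a M) (.app N a M')
  | abs_congr {a x M M'} : EqTh M M' → EqTh (.abs a x M) (.abs a x M')

/- ===== The stack machine and machine equivalence ===== -/
/-- Single-stack machine of the sequential λ-calculus (head = top). -/
inductive SStep : List Tm × Tm → List Tm × Tm → Prop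
  | push (S N M) : SStep (S, Tm.app N 0 M) (N :: S, M)
  | pop (S N x M) : SStep (N :: S, Tm.abs 0 x M) (S, Tm.subst N x M)

/-- `Ev S M T`: the machine run `(S, M) ⇓ T`. -/
def Ev (S : List Tm) (M : Tm) (T : List Tm) : Prop :=
  Relation.ReflTransGen SStep (S, M) (T, Tm.nil)

mutual
  /-- Machine equivalence `M ~ M' : t` for closed terms, by induction on types:
  at base type, equality; at arrow type, equivalent inputs give terminating runs
  with equivalent outputs. -/
  def MEquiv : STy → Tm → Tm → Prop
    | .base _, M, M' => M = M'
    | .arr s t, M, M' => ∀ S S', StackEquiv s S S' →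
        ∃ T T', Ev S M T ∧ Ev S' M' T' ∧ StackEquiv t T T'
  /-- Pairwise equivalence of stacks at a stack type. -/
  def StackEquiv : List STy → List Tm → List Tm → Prop
    | [], S, S' => S = [] ∧ S' = []
    | r :: ts, S, S' => ∃ N N' R R',
        S = N :: R ∧ S' = N' :: R' ∧ MEquiv r N N' ∧ StackEquiv ts R R'
end

/-- Simultaneous substitution of a stack of (closed) terms for a vector of variables. -/
def msubst : List ℕ → List Tm → Tm → Tm
  | x :: xs, N :: Ns, M => msubst xs Ns (Tm.subst N x M)
  | _, _, M => M

/-- Machine equivalence of open terms `x⃗:w⃗ ⊢ M ~ M' : t`. -/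
def OEquiv (Γ : List (ℕ × STy)) (M M' : Tm) (t : STy) : Prop :=
  ∀ W W', StackEquiv (Γ.map Prod.snd) W W' →
    MEquiv t (msubst (Γ.map Prod.fst) W M) (msubst (Γ.map Prod.fst) W' M')

/-- Currying `M* := <x⃗>.[[x⃗].M]`. -/
def curryT (xs : List ℕ) (M : Tm) : Tm := pops xs (Tm.app (pushes xs M) 0 Tm.nil)

/-- Evaluation `ε := <z>.z`. -/
def evalT (z : ℕ) : Tm := Tm.abs 0 z (Tm.var z Tm.nil)

/-! Composing the curried term with `ε` creates a β-redex `[[x⃗].M].<z>.z` that reduces to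
`[x⃗].M`, leaving `<x⃗>.[x⃗].M`, which the interchange law with an empty second vector identifies
with `M`. The second law is an instance of higher-order η read backwards. -/

namespace Tm

@[simp]
lemma comp_nil : ∀ M : Tm, comp M nil = M
  | nil => rfl
  | var x N => congrArg (var x) (comp_nil N)
  | app P a N => congrArg (app P a) (comp_nil N)
  | abs a x N => congrArg (abs a x) (comp_nil N)

lemma comp_pops (xs : List ℕ) (P Q : Tm) : comp (pops xs P) Q = pops xs (comp P Q) := by
  induction xs generalizing P with
  | nil => rfl
  | cons x xs ih => exact ih (abs 0 x P)

end Tm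

namespace EqTh

lemma pops_congr {A B : Tm} (xs : List ℕ) (h : EqTh A B) : EqTh (pops xs A) (pops xs B) := by
  induction xs generalizing A B with
  | nil => exact h
  | cons x xs ih => exact ih (abs_congr h)

lemma app_evalT (N : Tm) (z : ℕ) : EqTh (.app N 0 (evalT z)) N := by
  simpa [evalT, Tm.subst] using @beta N z (.var z .nil)

lemma pops_pushes {xs : List ℕ} {M : Tm} (hnd : xs.Nodup) (hf : FreshL xs M) :
    EqTh (pops xs (pushes xs M)) M := by
  simpa [pops, pushes, Tm.comp] using
    @interchange xs [] .nil M hnd List.nodup_nil (by simp [FreshL, Tm.fv]) hf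
      (by simp [FreshL]) (by simp [FreshL])

lemma comp_curryT_evalT {xs : List ℕ} {M : Tm} (z : ℕ) (hnd : xs.Nodup) (hf : FreshL xs M) :
    EqTh (Tm.comp (curryT xs M) (evalT z)) M := by
  rw [curryT, Tm.comp_pops]
  exact (pops_congr xs (app_evalT _ z)).trans (pops_pushes hnd hf)

lemma curryT_comp_evalT {xs : List ℕ} {z : ℕ} {N : Tm} (hnd : xs.Nodup) (hf : FreshL xs N)
    (hz : z ∉ N.fv) : EqTh (curryT xs (Tm.comp N (evalT z))) N :=
  (etaho hnd hf hz).symm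

end EqTh

/-- modulo the equational theory, currying satisfies the
exponential laws `(id × M*) ; ε = M` and `((id × N) ; ε)* = N`, so exponents
exist and are unique. -/
theorem exponential_laws {r s t : List STy} {M N : Tm} (xs : List ℕ) (z : ℕ)
    (DM : SDeriv [] M (.arr (s ++ r) t)) (DN : SDeriv [] N (.arr s [STy.arr r t]))
    (hx : xs.length = s.length) (hnd : xs.Nodup)
    (hfM : FreshL xs M) (hfN : FreshL xs N)
    (hzM : z ∉ Tm.fv M) (hzN : z ∉ Tm.fv N) (hzx : z ∉ xs) :
    EqTh (Tm.comp (curryT xs M) (evalT z)) M ∧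
    EqTh (curryT xs (Tm.comp N (evalT z))) N :=
  ⟨EqTh.comp_curryT_evalT z hnd hfM, EqTh.curryT_comp_evalT hnd hfN hzN⟩
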